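/- Let n > m ≥ 2 be integers and k = n + 1 - m. Let λ, μ be k-strict partitions with m parts, each part at most n+k, satisfying |λ| + |μ| < 2n + 1. Define f(λ,j) = j - 1 - #{i < j : λ_i + λ_j ≤ 2k + 1 + j - i}. Then for all j ∈ [1,m], f(λ, m+1-j) + f(μ, j) ≤ n + k - λ_{m+1-j} - μ_j. -/

import Mathlib

/-!
For a `k`-strict partition `p` and an index `j`, the indices `i < j` with
`p i + p j > 2k + 1 + j - i` form an initial segment `[1, c]`, `c = f(p, j)`: such an `i` has
`p i > k + 1`, and along a run of parts larger than `k` the parts drop by at least one per step.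
On that segment `p i ≥ p j + (j - i)`, so `2 |p| ≥ 2 j p_j + c (c + 1)`. Hence
`c + p_j + j ≤ |p| + 1` as soon as `c + p_j > 0`, and `c + p_j ≤ n` when `c > 0` and `|p| ≤ 2n`.
Adding the first bound for `λ` at `m + 1 - j` and for `μ` at `j` proves the claim when neither
side vanishes; otherwise the second bound, or `p_j ≤ p_1 ≤ n + k`, does.
-/

/-- `f(λ,j) = j - 1 - #{i : 1 ≤ i < j, λ_i + λ_j ≤ 2k + 1 + j - i}`, the number of
indices `i < j` with `λ_i + λ_j > 2k + 1 + j - i` (even orthogonal case). -/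
def fCountD (k : ℕ) (lam : ℕ → ℕ) (j : ℕ) : ℕ :=
  j - 1 - ((Finset.Ico 1 j).filter fun i => lam i + lam j ≤ 2 * k + 1 + j - i).card

open Finset

structure IsKStrict (k m : ℕ) (p : ℕ → ℕ) : Prop where
  antitone : ∀ i j, 1 ≤ i → i ≤ j → j ≤ m → p j ≤ p i
  strict : ∀ j, 1 ≤ j → j < m → k < p j → p (j + 1) < p j

def bigPairs (k : ℕ) (p : ℕ → ℕ) (j : ℕ) : Finset ℕ :=
  (Ico 1 j).filter fun i => 2 * k + 1 + j - i < p i + p j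

lemma fCountD_eq_card_bigPairs (k : ℕ) (p : ℕ → ℕ) (j : ℕ) :
    fCountD k p j = #(bigPairs k p j) := by
  have := card_filter_add_card_filter_not
    (s := Ico 1 j) (p := fun i => p i + p j ≤ 2 * k + 1 + j - i)
  simp only [not_le, Nat.card_Ico] at this
  rw [fCountD, bigPairs]
  omega

lemma fCountD_lt (k : ℕ) (p : ℕ → ℕ) {j : ℕ} (hj : 1 ≤ j) : fCountD k p j < j := by
  unfold fCountD
  omega

lemma add_le_of_mul_le {n f b : ℕ} (hf : 1 ≤ f) (h : (f + 1) * (2 * b + f) ≤ 4 * n) :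
    f + b ≤ n := by
  obtain ⟨g, rfl⟩ := Nat.exists_eq_add_of_le' hf
  -- `(f + 1) (2b + f) + 2 - 4 (f + b) = (f - 1) (2b + f - 2) ≥ 0`
  nlinarith [Nat.le_mul_self g]

lemma two_mul_sum_Icc_ge {p : ℕ → ℕ} {a c : ℕ} (h : ∀ i ∈ Icc 1 c, a + (c + 1 - i) ≤ p i) :
    2 * (c * a) + c * (c + 1) ≤ 2 * ∑ i ∈ Icc 1 c, p i := by
  induction c generalizing a with
  | zero => simp
  | succ c ih =>
    have hlow : 2 * (c * (a + 1)) + c * (c + 1) ≤ 2 * ∑ i ∈ Icc 1 c, p i :=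
      ih fun i hi => by
        rw [mem_Icc] at hi
        have := h i (by rw [mem_Icc]; omega)
        omega
    have htop : a + 1 ≤ p (c + 1) := by have := h (c + 1) (by simp); omega
    rw [sum_Icc_succ_top (by omega)]
    nlinarith

namespace IsKStrict

variable {k m : ℕ} {p : ℕ → ℕ}

lemma add_sub_le (hp : IsKStrict k m p) {i s : ℕ} (hi : 1 ≤ i) (his : i ≤ s) (hsm : s ≤ m)
    (hks : k < p s) : p s + (s - i) ≤ p i := by
  induction s, his using Nat.le_induction with
  | base => simp
  | succ s his ih =>
    have hlt : p (s + 1) < p s := hp.strict s (by omega) (by omega)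
      (hks.trans_le (hp.antitone s (s + 1) (by omega) (by omega) hsm))
    have := ih (by omega) (by omega)
    omega

lemma mem_bigPairs_of_le (hp : IsKStrict k m p) {i j s : ℕ} (hjm : j ≤ m)
    (hs : s ∈ bigPairs k p j) (hi : 1 ≤ i) (his : i ≤ s) : i ∈ bigPairs k p j := by
  simp only [bigPairs, mem_filter, mem_Ico] at hs ⊢
  obtain ⟨⟨hs1, hsj⟩, hbig⟩ := hs
  have hps : p j ≤ p s := hp.antitone s j hs1 hsj.le hjm
  have := hp.add_sub_le hi his (by omega) (by omega)
  omega

lemma Icc_fCountD_subset_bigPairs (hp : IsKStrict k m p) {j : ℕ} (hjm : j ≤ m) :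
    Icc 1 (fCountD k p j) ⊆ bigPairs k p j := by
  intro i hi
  rw [mem_Icc] at hi
  by_contra hni
  have hsub : bigPairs k p j ⊆ Ico 1 i := by
    intro s hs
    have hs1 : 1 ≤ s := by simp only [bigPairs, mem_filter, mem_Ico] at hs; omega
    rw [mem_Ico]
    by_contra hge
    exact hni (hp.mem_bigPairs_of_le hjm hs hi.1 (by omega))
  have := card_le_card hsub
  rw [Nat.card_Ico, ← fCountD_eq_card_bigPairs] at this
  omega

lemma le_of_mem_bigPairs (hp : IsKStrict k m p) {i j : ℕ} (hjm : j ≤ m)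
    (hi : i ∈ bigPairs k p j) : p j + (j - i) ≤ p i := by
  simp only [bigPairs, mem_filter, mem_Ico] at hi
  by_cases hk : k < p j
  · exact hp.add_sub_le hi.1.1 hi.1.2.le hjm hk
  · omega

lemma two_mul_le_sum (hp : IsKStrict k m p) {j : ℕ} (hj : 1 ≤ j) (hjm : j ≤ m) :
    2 * (j * p j) + fCountD k p j * (fCountD k p j + 1) ≤ 2 * ∑ i ∈ Icc 1 m, p i := by
  set c := fCountD k p j
  have hcj : c < j := fCountD_lt k p hj
  have head : 2 * (c * p j) + c * (c + 1) ≤ 2 * ∑ i ∈ Icc 1 c, p i :=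
    two_mul_sum_Icc_ge fun i hi => by
      have := hp.le_of_mem_bigPairs hjm (hp.Icc_fCountD_subset_bigPairs hjm hi)
      omega
  have tail : (j - c) * p j ≤ ∑ i ∈ Ioc c j, p i := by
    have := card_nsmul_le_sum (Ioc c j) p (p j) fun i hi => by
      rw [mem_Ioc] at hi
      exact hp.antitone i j (by omega) hi.2 hjm
    simpa using this
  have split : ∑ i ∈ Icc 1 c, p i + ∑ i ∈ Ioc c j, p i = ∑ i ∈ Icc 1 j, p i := by
    rw [← zero_add 1, Icc_add_one_left_eq_Ioc, Icc_add_one_left_eq_Ioc,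
      sum_Ioc_consecutive _ (Nat.zero_le c) hcj.le]
  have sub : ∑ i ∈ Icc 1 j, p i ≤ ∑ i ∈ Icc 1 m, p i :=
    sum_le_sum_of_subset (Icc_subset_Icc_right hjm)
  have hj_split : c * p j + (j - c) * p j = j * p j := by
    rw [← add_mul, Nat.add_sub_cancel' hcj.le]
  linarith

lemma add_add_le_sum_add_one (hp : IsKStrict k m p) {j : ℕ} (hj : 1 ≤ j) (hjm : j ≤ m)
    (hpos : 1 ≤ fCountD k p j + p j) :
    fCountD k p j + p j + j ≤ ∑ i ∈ Icc 1 m, p i + 1 := by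
  set c := fCountD k p j
  rcases Nat.eq_zero_or_pos (p j) with h0 | hpj
  · -- with `p j = 0`, membership of `1` forces `p 1 > 2k + j`, and `p` is positive on `[1, c]`
    have hc : 1 ≤ c := by omega
    have hmem : ∀ i ∈ Icc 1 c, i ∈ bigPairs k p j := fun i hi =>
      hp.Icc_fCountD_subset_bigPairs hjm hi
    have h1 := hmem 1 (by simp [hc])
    simp only [bigPairs, mem_filter, mem_Ico] at h1
    have tail : c - 1 ≤ ∑ i ∈ Ioc 1 c, p i := by
      have := card_nsmul_le_sum (Ioc 1 c) p 1 fun i hi => by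
        have := hp.le_of_mem_bigPairs hjm (hmem i (Ioc_subset_Icc_self hi))
        have := fCountD_lt k p hj
        rw [mem_Ioc] at hi
        omega
      simpa using this
    have split : ∑ i ∈ Ioc 1 c, p i + p 1 = ∑ i ∈ Icc 1 c, p i := sum_Ioc_add_eq_sum_Icc hc
    have sub : ∑ i ∈ Icc 1 c, p i ≤ ∑ i ∈ Icc 1 m, p i :=
      sum_le_sum_of_subset (Icc_subset_Icc_right ((fCountD_lt k p hj).le.trans hjm))
    omega
  · have hsum : 2 * (j * p j) + c * (c + 1) ≤ 2 * ∑ i ∈ Icc 1 m, p i := hp.two_mul_le_sum hj hjm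
    have hj_pj : j + p j ≤ j * p j + 1 := by nlinarith
    have hc : c ≤ c * c := Nat.le_mul_self c
    nlinarith

lemma fCountD_add_le (hp : IsKStrict k m p) {n j : ℕ} (htop : p 1 ≤ n + k) (hj : 1 ≤ j)
    (hjm : j ≤ m) (hsum : ∑ i ∈ Icc 1 m, p i ≤ 2 * n) : fCountD k p j + p j ≤ n + k := by
  rcases Nat.eq_zero_or_pos (fCountD k p j) with hc | hc
  · have := hp.antitone 1 j le_rfl hj hjm
    omega
  · have hcj : fCountD k p j + 1 ≤ j := fCountD_lt k p hj
    have := hp.two_mul_le_sum hj hjm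
    have := add_le_of_mul_le hc (n := n) (b := p j) (by nlinarith [Nat.mul_le_mul_right (p j) hcj])
    omega

end IsKStrict

theorem stmt_5_general (n m k : ℕ) (hk : k = n + 1 - m)
    (lam mu : ℕ → ℕ)
    (hlamtop : lam 1 ≤ n + k) (hmutop : mu 1 ≤ n + k)
    (hlamdec : ∀ i j, 1 ≤ i → i ≤ j → j ≤ m → lam j ≤ lam i)
    (hmudec : ∀ i j, 1 ≤ i → i ≤ j → j ≤ m → mu j ≤ mu i)
    (hlamstrict : ∀ j, 1 ≤ j → j < m → k < lam j → lam (j + 1) < lam j)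
    (hmustrict : ∀ j, 1 ≤ j → j < m → k < mu j → mu (j + 1) < mu j)
    (hsum : (∑ i ∈ Finset.Icc 1 m, lam i) + (∑ i ∈ Finset.Icc 1 m, mu i) < 2 * n + 1) :
    ∀ j, 1 ≤ j → j ≤ m →
      fCountD k lam (m + 1 - j) + fCountD k mu j + lam (m + 1 - j) + mu j ≤ n + k := by
  intro j hj hjm
  have hlam : IsKStrict k m lam := ⟨hlamdec, hlamstrict⟩
  have hmu : IsKStrict k m mu := ⟨hmudec, hmustrict⟩
  have hj' : 1 ≤ m + 1 - j := by omega
  have hjm' : m + 1 - j ≤ m := by omega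
  rcases Nat.eq_zero_or_pos (fCountD k lam (m + 1 - j) + lam (m + 1 - j)) with hlam0 | hlam0
  · have := hmu.fCountD_add_le hmutop hj hjm (by omega)
    omega
  rcases Nat.eq_zero_or_pos (fCountD k mu j + mu j) with hmu0 | hmu0
  · have := hlam.fCountD_add_le hlamtop hj' hjm' (by omega)
    omega
  have := hlam.add_add_le_sum_add_one hj' hjm' hlam0
  have := hmu.add_add_le_sum_add_one hj hjm hmu0
  omega

/-- Let `n > m ≥ 2`, `k = n + 1 - m`, and let `λ, μ` be `k`-strict partitions with `m`
parts, each part at most `n + k`, with `|λ| + |μ| < 2n + 1`.  Then for all `1 ≤ j ≤ m`,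
`f(λ, m+1-j) + f(μ, j) ≤ n + k - λ_{m+1-j} - μ_j`. -/
theorem stmt_5 (n m k : ℕ) (hm : 2 ≤ m) (hmn : m < n) (hk : k = n + 1 - m)
    (lam mu : ℕ → ℕ)
    (hlamtop : lam 1 ≤ n + k) (hmutop : mu 1 ≤ n + k)
    (hlamdec : ∀ i j, 1 ≤ i → i ≤ j → j ≤ m → lam j ≤ lam i)
    (hmudec : ∀ i j, 1 ≤ i → i ≤ j → j ≤ m → mu j ≤ mu i)
    (hlamstrict : ∀ j, 1 ≤ j → j < m → k < lam j → lam (j + 1) < lam j)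
    (hmustrict : ∀ j, 1 ≤ j → j < m → k < mu j → mu (j + 1) < mu j)
    (hsum : (∑ i ∈ Finset.Icc 1 m, lam i) + (∑ i ∈ Finset.Icc 1 m, mu i) < 2 * n + 1) :
    ∀ j, 1 ≤ j → j ≤ m →
      fCountD k lam (m + 1 - j) + fCountD k mu j + lam (m + 1 - j) + mu j ≤ n + k :=
  stmt_5_general n m k hk lam mu hlamtop hmutop hlamdec hmudec hlamstrict hmustrict hsum
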